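/- Suppose σ has order n (possibly infinite) with n ≥ m−1 and σ commutes with every τ ∈ Aut_F(K). Let g(t) = t^m − Σ_{i=0}^{m−1} b_i t^i ∈ K[t;σ] be not invariant with b_0 ∈ K∖F, and let f(t) = t^m − b_0 ∈ K[t;σ]. Then every F-algebra automorphism of S_g is also an F-algebra automorphism of S_f (both algebras have the same underlying F-vector space R_m), and in this way Aut_F(S_g) is a subgroup of Aut_F(S_f). -/

import Mathlib

/-! ## The Petit algebra `S_f = K[t;σ]/K[t;σ]f`

For a twisted polynomial ring `R = K[t;σ]` (multiplication determined by `t·a = σ(a)·t`)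
and the monic skew polynomial `f(t) = t^m - Σ_{i<m} a_i t^i` (encoded by its coefficient
vector `a : Fin m → K`), the Petit algebra `S_f` is realised on coefficient vectors
`Fin m → K` (the polynomials of degree `< m`), with multiplication `g ∘ h = (gh) mod_r f`. -/

/-- The remainder of `t^s` after right division by `f(t) = t^m - Σ_{i<m} a_i t^i`:
for `s < m` it is `t^s` itself, and for `s ≥ m` one uses
`t^s ≡ Σ_i σ^{s-m}(a_i) t^{s-m+i} (mod R·f)`. -/
noncomputable def tred {K : Type*} [Field K] (σ : K → K) (m : ℕ) (a : Fin m → K) (s : ℕ) :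
    Fin m → K :=
  if _h : s < m then (fun i => if (i : ℕ) = s then (1 : K) else 0)
  else ∑ i : Fin m, σ^[s - m] (a i) • tred σ m a (s - m + (i : ℕ))
termination_by s
decreasing_by
  have hi := i.isLt
  omega

/-- The multiplication `g ∘ h = (gh) mod_r f` of the Petit algebra `S_f`. -/
noncomputable def pmul {K : Type*} [Field K] (σ : K → K) {m : ℕ} (a : Fin m → K)
    (x y : Fin m → K) : Fin m → K :=
  ∑ i : Fin m, ∑ j : Fin m, (x i * σ^[(i : ℕ)] (y j)) • tred σ m a ((i : ℕ) + (j : ℕ))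

/-- The unit element `1` of `S_f`. -/
noncomputable def pone (K : Type*) [Field K] (m : ℕ) : Fin m → K :=
  fun i => if (i : ℕ) = 0 then 1 else 0

/-- The element `t` of `S_f`. -/
noncomputable def tvec (K : Type*) [Field K] (m : ℕ) : Fin m → K :=
  fun i => if (i : ℕ) = 1 then 1 else 0

/-- The canonical copy of `c ∈ K` inside `S_f`. -/
noncomputable def iota (K : Type*) [Field K] (m : ℕ) (c : K) : Fin m → K :=
  fun i => if (i : ℕ) = 0 then c else 0

/-- `S_f` is associative; by Petit's theorem this holds if and only if `f` is
invariant (i.e. `R·f` is a two-sided ideal of `R = K[t;σ]`). -/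
def PAssoc {K : Type*} [Field K] (σ : K → K) {m : ℕ} (a : Fin m → K) : Prop :=
  ∀ x y z : Fin m → K, pmul σ a (pmul σ a x y) z = pmul σ a x (pmul σ a y z)

/-- `H` is an automorphism of the algebra `S_f` over `F = Fix(σ)`: an `F`-linear
bijection preserving the multiplication and the unit. -/
structure IsPetitAut {K : Type*} [Field K] (σ : K → K) {m : ℕ} (a : Fin m → K)
    (H : (Fin m → K) → (Fin m → K)) : Prop where
  bijective : Function.Bijective H
  map_add : ∀ x y, H (x + y) = H x + H y
  map_smul : ∀ c : K, σ c = c → ∀ x, H (c • x) = c • H x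
  map_mul : ∀ x y, H (pmul σ a x y) = pmul σ a (H x) (H y)
  map_one : H (pone K m) = pone K m

/-- `H` is an inner automorphism `x ↦ (c_l ∘ x) ∘ c` of `S_f`, where `c_l` is a
left inverse of `c`. -/
def IsInnerPetit {K : Type*} [Field K] (σ : K → K) {m : ℕ} (a : Fin m → K)
    (H : (Fin m → K) → (Fin m → K)) : Prop :=
  ∃ c cl : Fin m → K, pmul σ a cl c = pone K m ∧
    ∀ x, H x = pmul σ a (pmul σ a cl x) c

/-- The map `H_{τ,k} : Σ x_i t^i ↦ τ(x_0) + Σ_{i≥1} τ(x_i)·(Π_{l<i} σ^l(k))·t^i`. -/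
noncomputable def Hmap {K : Type*} [Field K] (σ τ : K → K) {m : ℕ} (k : K)
    (x : Fin m → K) : Fin m → K :=
  fun i => τ (x i) * ∏ l ∈ Finset.range (i : ℕ), σ^[l] k

section
variable {K : Type*} [Field K]

def ev (K : Type*) [Field K] (m : ℕ) (s : ℕ) : Fin m → K := fun i => if (i : ℕ) = s then 1 else 0

lemma tred_lt (σ : K → K) {m : ℕ} (a : Fin m → K) {s : ℕ} (h : s < m) :
    tred σ m a s = ev K m s := by
  rw [tred]; simp only [h, dite_true]; rfl

lemma tred_ge (σ : K → K) {m : ℕ} (a : Fin m → K) {s : ℕ} (h : m ≤ s) :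
    tred σ m a s = ∑ i : Fin m, σ^[s - m] (a i) • tred σ m a (s - m + (i : ℕ)) := by
  rw [tred]; simp [Nat.not_lt.mpr h]

lemma decomp {m : ℕ} (v : Fin m → K) : v = ∑ i : Fin m, v i • ev K m (i : ℕ) := by
  funext w
  rw [Finset.sum_apply]
  simp [ev, Fin.val_inj]

variable (σ : K ≃+* K)

lemma it_zero (n : ℕ) : (⇑σ)^[n] (0 : K) = 0 := by
  induction n with
  | zero => rfl
  | succ n ih => rw [Function.iterate_succ_apply', ih, map_zero]

lemma it_one (n : ℕ) : (⇑σ)^[n] (1 : K) = 1 := by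
  induction n with
  | zero => rfl
  | succ n ih => rw [Function.iterate_succ_apply', ih, map_one]

lemma it_add (n : ℕ) (x y : K) : (⇑σ)^[n] (x + y) = (⇑σ)^[n] x + (⇑σ)^[n] y := by
  induction n with
  | zero => rfl
  | succ n ih => rw [Function.iterate_succ_apply', ih, map_add, Function.iterate_succ_apply',
      Function.iterate_succ_apply']

lemma it_mul (n : ℕ) (x y : K) : (⇑σ)^[n] (x * y) = (⇑σ)^[n] x * (⇑σ)^[n] y := by
  induction n with
  | zero => rfl
  | succ n ih => rw [Function.iterate_succ_apply', ih, map_mul, Function.iterate_succ_apply',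
      Function.iterate_succ_apply']

variable {m : ℕ} (a : Fin m → K)

/-- `t^i ∘ v` -/
noncomputable def pm1 (i : ℕ) (v : Fin m → K) : Fin m → K :=
  ∑ j : Fin m, (⇑σ)^[i] (v j) • tred (⇑σ) m a (i + (j : ℕ))

lemma pm1_add (i : ℕ) (v w : Fin m → K) :
    pm1 σ a i (v + w) = pm1 σ a i v + pm1 σ a i w := by
  unfold pm1
  rw [← Finset.sum_add_distrib]
  refine Finset.sum_congr rfl fun j _ => ?_
  rw [Pi.add_apply, it_add, add_smul]

lemma pm1_smul (i : ℕ) (c : K) (v : Fin m → K) :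
    pm1 σ a i (c • v) = (⇑σ)^[i] c • pm1 σ a i v := by
  unfold pm1
  rw [Finset.smul_sum]
  refine Finset.sum_congr rfl fun j _ => ?_
  rw [Pi.smul_apply, smul_eq_mul, it_mul, smul_smul]

lemma pm1_zero_arg (i : ℕ) : pm1 σ a i (0 : Fin m → K) = 0 := by
  unfold pm1
  simp [it_zero]

lemma pm1_sum {ι : Type*} (s : Finset ι) (f : ι → Fin m → K) (i : ℕ) :
    pm1 σ a i (∑ x ∈ s, f x) = ∑ x ∈ s, pm1 σ a i (f x) := by
  classical
  induction s using Finset.induction with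
  | empty => simpa using pm1_zero_arg σ a i
  | insert _ _ hx ih => rw [Finset.sum_insert hx, Finset.sum_insert hx, pm1_add, ih]

lemma pm1_tred (i : ℕ) : ∀ s : ℕ, pm1 σ a i (tred (⇑σ) m a s) = tred (⇑σ) m a (i + s) := by
  intro s
  induction s using Nat.strong_induction_on with
  | _ s ih =>
    rcases lt_or_ge s m with h | h
    · rw [tred_lt _ _ h]
      unfold pm1
      rcases m.eq_zero_or_pos with hm | hm
      · subst hm; exact Subsingleton.elim _ _
      rw [Finset.sum_eq_single ⟨s, h⟩]
      · simp [ev, it_one]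
      · intro j _ hj
        have : (j : ℕ) ≠ s := fun hc => hj (Fin.ext hc)
        simp [ev, this, it_zero]
      · simp
    · rw [tred_ge _ _ h, pm1_sum]
      have key : ∀ p : Fin m, pm1 σ a i ((⇑σ)^[s - m] (a p) • tred (⇑σ) m a (s - m + (p : ℕ)))
          = (⇑σ)^[i + s - m] (a p) • tred (⇑σ) m a (i + s - m + (p : ℕ)) := by
        intro p
        rw [pm1_smul, ih (s - m + (p : ℕ)) (by have := p.isLt; omega)]
        rw [← Function.iterate_add_apply]
        have h1 : i + (s - m) = i + s - m := by omega
        have h2 : i + (s - m + (p : ℕ)) = i + s - m + (p : ℕ) := by omega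
        rw [h1, h2]
      rw [Finset.sum_congr rfl (fun p _ => key p)]
      rw [tred_ge _ _ (by omega : m ≤ i + s)]

lemma pm1_pm1 (i c : ℕ) (z : Fin m → K) :
    pm1 σ a i (pm1 σ a c z) = pm1 σ a (i + c) z := by
  have hz : pm1 σ a c z = ∑ j : Fin m, (⇑σ)^[c] (z j) • tred (⇑σ) m a (c + (j:ℕ)) := rfl
  rw [hz, pm1_sum]
  have : ∀ j : Fin m, pm1 σ a i ((⇑σ)^[c] (z j) • tred (⇑σ) m a (c + (j:ℕ)))
      = (⇑σ)^[i + c] (z j) • tred (⇑σ) m a (i + c + (j:ℕ)) := by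
    intro j
    rw [pm1_smul, pm1_tred, ← Function.iterate_add_apply, add_assoc]
  rw [Finset.sum_congr rfl (fun j _ => this j)]
  rfl

end
section
variable {K : Type*} [Field K] (σ : K ≃+* K) {m : ℕ} (a : Fin m → K)

lemma pm1_zero (v : Fin m → K) : pm1 σ a 0 v = v := by
  unfold pm1
  simp only [Function.iterate_zero, id_eq, Nat.zero_add]
  conv_rhs => rw [decomp v]
  exact Finset.sum_congr rfl fun j _ => by rw [tred_lt _ _ j.isLt]

lemma pmul_eq (x v : Fin m → K) : pmul (⇑σ) a x v = ∑ i : Fin m, x i • pm1 σ a (i : ℕ) v := by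
  unfold pmul pm1
  refine Finset.sum_congr rfl fun i _ => ?_
  rw [Finset.smul_sum]
  exact Finset.sum_congr rfl fun j _ => by rw [smul_smul]

lemma pmul_add_left (x x' z : Fin m → K) :
    pmul (⇑σ) a (x + x') z = pmul (⇑σ) a x z + pmul (⇑σ) a x' z := by
  rw [pmul_eq, pmul_eq, pmul_eq, ← Finset.sum_add_distrib]
  exact Finset.sum_congr rfl fun i _ => by rw [Pi.add_apply, add_smul]

lemma pmul_smul_left (c : K) (x z : Fin m → K) :
    pmul (⇑σ) a (c • x) z = c • pmul (⇑σ) a x z := by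
  rw [pmul_eq, pmul_eq, Finset.smul_sum]
  exact Finset.sum_congr rfl fun i _ => by rw [Pi.smul_apply, smul_eq_mul, mul_smul]

lemma pmul_zero_left (z : Fin m → K) : pmul (⇑σ) a 0 z = 0 := by
  rw [pmul_eq]
  simp

lemma pmul_sum_left {ι : Type*} (s : Finset ι) (f : ι → Fin m → K) (z : Fin m → K) :
    pmul (⇑σ) a (∑ x ∈ s, f x) z = ∑ x ∈ s, pmul (⇑σ) a (f x) z := by
  classical
  induction s using Finset.induction with
  | empty => simpa using pmul_zero_left σ a z
  | insert _ _ hx ih => rw [Finset.sum_insert hx, Finset.sum_insert hx, pmul_add_left, ih]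

lemma pmul_ev_left (i : Fin m) (v : Fin m → K) :
    pmul (⇑σ) a (ev K m (i : ℕ)) v = pm1 σ a (i : ℕ) v := by
  rw [pmul_eq, Finset.sum_eq_single i]
  · simp [ev]
  · intro j _ hj
    have : (j : ℕ) ≠ (i : ℕ) := fun hc => hj (Fin.ext hc)
    simp [ev, this]
  · simp

lemma pmul_ev_ev (i j : Fin m) :
    pmul (⇑σ) a (ev K m (i : ℕ)) (ev K m (j : ℕ)) = tred (⇑σ) m a ((i : ℕ) + (j : ℕ)) := by
  rw [pmul_ev_left, ← tred_lt (⇑σ) a j.isLt, pm1_tred]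

lemma iota_eq (c : K) : iota K m c = c • ev K m 0 := by
  funext i
  simp [iota, ev, mul_ite]

lemma pmul_iota_left (hm : 0 < m) (c : K) (v : Fin m → K) :
    pmul (⇑σ) a (iota K m c) v = c • v := by
  have h0 : ((⟨0, hm⟩ : Fin m) : ℕ) = 0 := rfl
  rw [iota_eq, pmul_smul_left, ← h0, pmul_ev_left, h0, pm1_zero]

lemma pmul_iota_right (hm : 0 < m) (c : K) (v : Fin m → K) :
    pmul (⇑σ) a v (iota K m c) = ∑ i : Fin m, (v i * (⇑σ)^[(i : ℕ)] c) • ev K m (i : ℕ) := by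
  unfold pmul
  refine Finset.sum_congr rfl fun i _ => ?_
  rw [Finset.sum_eq_single (⟨0, hm⟩ : Fin m)]
  · have : iota K m c ⟨0, hm⟩ = c := rfl
    rw [this, Nat.add_zero, tred_lt (⇑σ) a i.isLt]
  · intro j _ hj
    have : (j : ℕ) ≠ 0 := fun hc => hj (Fin.ext hc)
    simp [iota, this, it_zero]
  · simp

/-- The associativity defect `rem(t^s) ∘ z - rem(t^s z)`. -/
noncomputable def Ddef (s : ℕ) (z : Fin m → K) : Fin m → K :=
  pmul (⇑σ) a (tred (⇑σ) m a s) z - pm1 σ a s z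

lemma pm1_sub (i : ℕ) (v w : Fin m → K) :
    pm1 σ a i (v - w) = pm1 σ a i v - pm1 σ a i w := by
  unfold pm1
  rw [← Finset.sum_sub_distrib]
  refine Finset.sum_congr rfl fun j _ => ?_
  have : (v - w) j = v j + (-1) * w j := by simp [sub_eq_add_neg]
  rw [this, it_add, it_mul, add_smul]
  simp [it_one, sub_eq_add_neg]

lemma Ddef_lt {s : ℕ} (h : s < m) (z : Fin m → K) : Ddef σ a s z = 0 := by
  unfold Ddef
  have h0 : ((⟨s, h⟩ : Fin m) : ℕ) = s := rfl
  rw [tred_lt (⇑σ) a h, ← h0, pmul_ev_left, h0, sub_self]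

lemma tred_m (hm : 0 < m) : tred (⇑σ) m a m = ∑ p : Fin m, a p • ev K m (p : ℕ) := by
  rw [tred_ge (⇑σ) a (le_refl m)]
  refine Finset.sum_congr rfl fun p _ => ?_
  rw [Nat.sub_self]
  have : (0 : ℕ) + (p : ℕ) = (p : ℕ) := Nat.zero_add _
  rw [this, tred_lt (⇑σ) a p.isLt]
  rfl

lemma pmul_tred_m (hm : 0 < m) (z : Fin m → K) :
    pmul (⇑σ) a (tred (⇑σ) m a m) z = ∑ p : Fin m, a p • pm1 σ a (p : ℕ) z := by
  rw [tred_m σ a hm, pmul_sum_left]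
  exact Finset.sum_congr rfl fun p _ => by rw [pmul_smul_left, pmul_ev_left]

lemma Ddef_rec (hm : 0 < m) {s : ℕ} (h : m ≤ s) (z : Fin m → K) :
    Ddef σ a s z = (∑ p : Fin m, (⇑σ)^[s - m] (a p) • Ddef σ a (s - m + (p : ℕ)) z)
      + pm1 σ a (s - m) (Ddef σ a m z) := by
  have e1 : pmul (⇑σ) a (tred (⇑σ) m a s) z
      = ∑ p : Fin m, (⇑σ)^[s - m] (a p) •
          (Ddef σ a (s - m + (p : ℕ)) z + pm1 σ a (s - m + (p : ℕ)) z) := by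
    rw [tred_ge (⇑σ) a h, pmul_sum_left]
    refine Finset.sum_congr rfl fun p _ => ?_
    rw [pmul_smul_left]
    congr 1
    unfold Ddef
    abel
  have e2 : pm1 σ a (s - m) (Ddef σ a m z)
      = (∑ p : Fin m, (⇑σ)^[s - m] (a p) • pm1 σ a (s - m + (p : ℕ)) z) - pm1 σ a s z := by
    unfold Ddef
    rw [pm1_sub, pm1_pm1]
    have : s - m + m = s := by omega
    rw [this, pmul_tred_m σ a hm, pm1_sum]
    congr 1
    refine Finset.sum_congr rfl fun p _ => ?_
    rw [pm1_smul, pm1_pm1]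
  have e0 : Ddef σ a s z = pmul (⇑σ) a (tred (⇑σ) m a s) z - pm1 σ a s z := rfl
  rw [e0, e1, e2]
  rw [Finset.sum_congr rfl (fun p _ => smul_add ((⇑σ)^[s - m] (a p)) _ _),
    Finset.sum_add_distrib]
  abel

lemma Ddef_all (hm : 0 < m) (h0 : ∀ z, Ddef σ a m z = 0) :
    ∀ s z, Ddef σ a s z = 0 := by
  intro s
  induction s using Nat.strong_induction_on with
  | _ s ih =>
    intro z
    rcases lt_or_ge s m with h | h
    · exact Ddef_lt σ a h z
    · rw [Ddef_rec σ a hm h z, h0, pm1_zero_arg]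
      rw [Finset.sum_congr rfl (fun p _ => by
        rw [ih (s - m + (p : ℕ)) (by have := p.isLt; omega) z, smul_zero])]
      simp

lemma assoc_formula (x y z : Fin m → K) :
    pmul (⇑σ) a (pmul (⇑σ) a x y) z = pmul (⇑σ) a x (pmul (⇑σ) a y z)
      + ∑ i : Fin m, ∑ j : Fin m,
          (x i * (⇑σ)^[(i : ℕ)] (y j)) • Ddef σ a ((i : ℕ) + (j : ℕ)) z := by
  have lhs : pmul (⇑σ) a (pmul (⇑σ) a x y) z
      = ∑ i : Fin m, ∑ j : Fin m, (x i * (⇑σ)^[(i : ℕ)] (y j)) •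
          pmul (⇑σ) a (tred (⇑σ) m a ((i : ℕ) + (j : ℕ))) z := by
    have hxy : pmul (⇑σ) a x y = ∑ i : Fin m, ∑ j : Fin m,
        (x i * (⇑σ)^[(i : ℕ)] (y j)) • tred (⇑σ) m a ((i : ℕ) + (j : ℕ)) := rfl
    rw [hxy, pmul_sum_left]
    refine Finset.sum_congr rfl fun i _ => ?_
    rw [pmul_sum_left]
    exact Finset.sum_congr rfl fun j _ => by rw [pmul_smul_left]
  have rhs : pmul (⇑σ) a x (pmul (⇑σ) a y z)
      = ∑ i : Fin m, ∑ j : Fin m, (x i * (⇑σ)^[(i : ℕ)] (y j)) •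
          pm1 σ a ((i : ℕ) + (j : ℕ)) z := by
    rw [pmul_eq]
    refine Finset.sum_congr rfl fun i _ => ?_
    have hyz : pmul (⇑σ) a y z = ∑ j : Fin m, y j • pm1 σ a (j : ℕ) z := pmul_eq σ a y z
    rw [hyz, pm1_sum, Finset.smul_sum]
    refine Finset.sum_congr rfl fun j _ => ?_
    rw [pm1_smul, pm1_pm1, smul_smul]
  rw [lhs, rhs, ← Finset.sum_add_distrib]
  refine Finset.sum_congr rfl fun i _ => ?_
  rw [← Finset.sum_add_distrib]
  refine Finset.sum_congr rfl fun j _ => ?_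
  unfold Ddef
  rw [smul_sub]
  abel

lemma passoc_of (hm : 0 < m) (h0 : ∀ z, Ddef σ a m z = 0) : PAssoc (⇑σ) a := by
  intro x y z
  rw [assoc_formula]
  rw [Finset.sum_congr rfl (fun i _ => Finset.sum_congr rfl (fun j _ => by
    rw [Ddef_all σ a hm h0 ((i : ℕ) + (j : ℕ)) z, smul_zero]))]
  simp

lemma nucl (hm : 0 < m) (hnb : ¬ PAssoc (⇑σ) a) (x : Fin m → K)
    (hx : ∀ y z, pmul (⇑σ) a (pmul (⇑σ) a x y) z = pmul (⇑σ) a x (pmul (⇑σ) a y z))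
    (d : Fin m) (hd1 : 1 ≤ (d : ℕ)) (hdx : x d ≠ 0)
    (hdmax : ∀ i : Fin m, (d : ℕ) < (i : ℕ) → x i = 0) : False := by
  have hmd : m - (d : ℕ) < m := by omega
  have key : ∀ z, Ddef σ a m z = 0 := by
    intro z
    have h := hx (ev K m (m - (d : ℕ))) z
    rw [assoc_formula] at h
    have h2 : ∑ i : Fin m, ∑ j : Fin m,
        (x i * (⇑σ)^[(i : ℕ)] (ev K m (m - (d : ℕ)) j)) • Ddef σ a ((i : ℕ) + (j : ℕ)) z
        = 0 := by
      exact add_eq_left.mp h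
    have h3 : ∀ i : Fin m, (∑ j : Fin m,
        (x i * (⇑σ)^[(i : ℕ)] (ev K m (m - (d : ℕ)) j)) • Ddef σ a ((i : ℕ) + (j : ℕ)) z)
        = x i • Ddef σ a ((i : ℕ) + (m - (d : ℕ))) z := by
      intro i
      rw [Finset.sum_eq_single (⟨m - (d : ℕ), hmd⟩ : Fin m)]
      · have : ev K m (m - (d : ℕ)) ⟨m - (d : ℕ), hmd⟩ = 1 := by simp [ev]
        rw [this, it_one, mul_one]
      · intro j _ hj
        have : (j : ℕ) ≠ m - (d : ℕ) := fun hc => hj (Fin.ext hc)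
        simp [ev, this, it_zero]
      · simp
    rw [Finset.sum_congr rfl (fun i _ => h3 i)] at h2
    rw [Finset.sum_eq_single d] at h2
    · have hdm : (d : ℕ) + (m - (d : ℕ)) = m := by omega
      rw [hdm] at h2
      rcases smul_eq_zero.mp h2 with h | h
      · exact absurd h hdx
      · exact h
    · intro i _ hi
      rcases Nat.lt_or_ge (i : ℕ) (d : ℕ) with hlt | hge
      · rw [Ddef_lt σ a (by omega) z, smul_zero]
      · have : (d : ℕ) < (i : ℕ) := by
          rcases Nat.lt_or_ge (d : ℕ) (i : ℕ) with h' | h'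
          · exact h'
          · exact absurd (Fin.ext (by omega)) hi
        rw [hdmax i this, zero_smul]
    · simp
  exact hnb (passoc_of σ a hm key)

end

section AuxPetit
variable {K : Type*} [Field K] (σ : K ≃+* K) {m : ℕ} (a : Fin m → K)

lemma sum_ev_apply (g : Fin m → K) (w : Fin m) :
    (∑ i : Fin m, g i • ev K m (i : ℕ)) w = g w := by
  rw [Finset.sum_apply]
  simp [ev, Fin.val_inj]

lemma iota_injective (hm : 0 < m) (c c' : K) (h : iota K m c = iota K m c') : c = c' := by
  have := congrFun h ⟨0, hm⟩
  simpa [iota] using this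

lemma Pprod (k : K) (i j : ℕ) :
    (∏ l ∈ Finset.range i, (⇑σ)^[l] k) * (⇑σ)^[i] (∏ l ∈ Finset.range j, (⇑σ)^[l] k)
      = ∏ l ∈ Finset.range (i + j), (⇑σ)^[l] k := by
  induction j with
  | zero => simp [it_one]
  | succ j ih =>
    rw [Finset.prod_range_succ, it_mul, ← mul_assoc, ih, ← Function.iterate_add_apply,
      show i + (j + 1) = (i + j) + 1 from rfl, Finset.prod_range_succ]

lemma aut_iota (hm : 0 < m) (hnb : ¬ PAssoc (⇑σ) a) (H : (Fin m → K) → (Fin m → K))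
    (Hsurj : Function.Surjective H)
    (Hmul : ∀ x y, H (pmul (⇑σ) a x y) = pmul (⇑σ) a (H x) (H y)) (c : K) :
    H (iota K m c) = iota K m (H (iota K m c) ⟨0, hm⟩) := by
  set u := H (iota K m c) with hu
  have hassoc : ∀ y z, pmul (⇑σ) a (pmul (⇑σ) a u y) z = pmul (⇑σ) a u (pmul (⇑σ) a y z) := by
    intro y z
    obtain ⟨y', rfl⟩ := Hsurj y
    obtain ⟨z', rfl⟩ := Hsurj z
    rw [hu]
    simp only [← Hmul]
    congr 1
    rw [pmul_iota_left σ a hm c y', pmul_smul_left,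
      pmul_iota_left σ a hm c (pmul (⇑σ) a y' z')]
  by_contra hcon
  have hex : ∃ i : Fin m, (i : ℕ) ≠ 0 ∧ u i ≠ 0 := by
    by_contra hne
    push_neg at hne
    apply hcon
    funext w
    rcases Nat.eq_zero_or_pos (w : ℕ) with h0 | h0
    · have hw : w = ⟨0, hm⟩ := Fin.ext h0
      subst hw
      simp [iota]
    · rw [hne w (by omega)]
      have : (w : ℕ) ≠ 0 := by omega
      simp [iota, this]
  obtain ⟨i0, hi0, hui0⟩ := hex
  classical
  set T := Finset.univ.filter (fun i : Fin m => u i ≠ 0) with hT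
  have hi0T : i0 ∈ T := by simp [hT, hui0]
  have hTne : T.Nonempty := ⟨i0, hi0T⟩
  set d := T.max' hTne with hd
  have hdT : d ∈ T := T.max'_mem hTne
  have hdx : u d ≠ 0 := by
    have := hdT
    rw [hT, Finset.mem_filter] at this
    exact this.2
  have hd1 : 1 ≤ (d : ℕ) := by
    have h1 := T.le_max' i0 hi0T
    have h2 : (i0 : ℕ) ≤ (d : ℕ) := h1
    omega
  have hdmax : ∀ i : Fin m, (d : ℕ) < (i : ℕ) → u i = 0 := by
    intro i hi
    by_contra hne
    have hiT : i ∈ T := by simp [hT, hne]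
    have h1 := T.le_max' i hiT
    have h2 : (i : ℕ) ≤ (d : ℕ) := h1
    omega
  exact nucl σ a hm hnb u hassoc d hd1 hdx hdmax

end AuxPetit

/-- **Theorem 2.5 (i).** Suppose `σ` has order `n ≥ m − 1` (possibly infinite;
equivalently `σ^j ≠ id` for `0 < j < m − 1`) and commutes with every `τ ∈ Aut_F(K)`.
Let `g(t) = t^m − Σ_{i<m} b_i t^i` be not invariant with `b₀ ∈ K∖F`, and let
`f(t) = t^m − b₀`.  Then every `F`-algebra automorphism of `S_g` is also an
`F`-algebra automorphism of `S_f` (same underlying space), so `Aut_F(S_g)` is a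
subgroup of `Aut_F(S_f)`. -/
theorem stmt8 {K : Type*} [Field K] (σ : K ≃+* K) (hσ : σ ≠ RingEquiv.refl K)
    (m : ℕ) (hm : 2 ≤ m)
    (horder : ∀ j : ℕ, 0 < j → j < m - 1 → (⇑σ)^[j] ≠ id)
    (hcomm : ∀ τ : K ≃+* K, (∀ c : K, σ c = c → τ c = c) → ∀ x, σ (τ x) = τ (σ x))
    (b : Fin m → K) (hnb : ¬ PAssoc (⇑σ) b)
    (hb0 : σ (b ⟨0, by omega⟩) ≠ b ⟨0, by omega⟩) :
    ∀ H : (Fin m → K) → (Fin m → K),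
      IsPetitAut (⇑σ) b H →
        IsPetitAut (⇑σ) (fun i : Fin m => if (i : ℕ) = 0 then b ⟨0, by omega⟩ else 0) H := by
  intro H hH
  obtain ⟨Hbij, Hadd, Hsmul, Hmul, Hone⟩ := hH
  have hm0 : 0 < m := by omega
  have hm1 : 1 < m := by omega
  set b0 : K := b ⟨0, hm0⟩ with hb0def
  -- H is an additive monoid hom
  have H0 : H 0 = 0 := by
    have h := Hadd 0 0
    rw [add_zero] at h
    exact add_eq_left.mp h.symm
  have Hsum : ∀ (f : Fin m → (Fin m → K)), H (∑ i, f i) = ∑ i, H (f i) := by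
    intro f
    exact map_sum (AddMonoidHom.mk' H Hadd) f Finset.univ
  -- the inverse map
  set G : (Fin m → K) → (Fin m → K) := ⇑(Equiv.ofBijective H Hbij).symm with hG
  have He : ∀ x, H (G x) = x := fun x => (Equiv.ofBijective H Hbij).apply_symm_apply x
  have Gsurj : Function.Surjective G := (Equiv.ofBijective H Hbij).symm.surjective
  have Gmul : ∀ u v, G (pmul (⇑σ) b u v) = pmul (⇑σ) b (G u) (G v) := by
    intro u v
    apply Hbij.1
    rw [He, Hmul, He, He]
  -- the induced map τ on K
  have Hι := aut_iota σ b hm0 hnb H Hbij.2 Hmul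
  set τ : K → K := fun c => H (iota K m c) ⟨0, hm0⟩ with hτ
  have Hιτ : ∀ c, H (iota K m c) = iota K m (τ c) := fun c => Hι c
  have Gι := aut_iota σ b hm0 hnb G Gsurj Gmul
  set τ' : K → K := fun c => G (iota K m c) ⟨0, hm0⟩ with hτ'
  have Gιτ' : ∀ c, G (iota K m c) = iota K m (τ' c) := fun c => Gι c
  have iinj : ∀ {c c' : K}, iota K m c = iota K m c' → c = c' :=
    fun h => iota_injective hm0 _ _ h
  have iota_add : ∀ c c' : K, iota K m (c + c') = iota K m c + iota K m c' := by
    intro c c'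
    funext w
    by_cases h : (w : ℕ) = 0 <;> simp [iota, h]
  have iota_mul : ∀ c c' : K, iota K m (c * c') = pmul (⇑σ) b (iota K m c) (iota K m c') := by
    intro c c'
    rw [pmul_iota_left σ b hm0]
    funext w
    by_cases h : (w : ℕ) = 0 <;> simp [iota, h]
  have izero : iota K m (0 : K) = 0 := by funext w; simp [iota]
  have ioneq : iota K m (1 : K) = pone K m := rfl
  have τadd : ∀ c c', τ (c + c') = τ c + τ c' := by
    intro c c'
    apply iinj
    rw [← Hιτ, iota_add, Hadd, Hιτ, Hιτ, iota_add]
  have τmul : ∀ c c', τ (c * c') = τ c * τ c' := by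
    intro c c'
    apply iinj
    rw [← Hιτ, iota_mul, Hmul, Hιτ, Hιτ, ← iota_mul]
  have τone : τ 1 = 1 := by
    apply iinj
    rw [← Hιτ, ioneq, Hone]
  have τzero : τ 0 = 0 := by
    apply iinj
    rw [← Hιτ, izero, H0]
  have τfix : ∀ c : K, σ c = c → τ c = c := by
    intro c hc
    apply iinj
    rw [← Hιτ]
    have h1 : iota K m c = c • pone K m := by
      funext w
      by_cases h : (w : ℕ) = 0 <;> simp [iota, pone, h]
    rw [h1, Hsmul c hc, Hone, ← h1]
  have τsurj : Function.Surjective τ := by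
    intro d
    refine ⟨τ' d, ?_⟩
    apply iinj
    rw [← Hιτ, ← Gιτ', He]
  have τinj : Function.Injective τ := by
    intro c c' h
    have h2 : H (iota K m c) = H (iota K m c') := by rw [Hιτ, Hιτ, h]
    exact iinj (Hbij.1 h2)
  set τh : K →+* K :=
    { toFun := τ, map_one' := τone, map_mul' := τmul, map_zero' := τzero,
      map_add' := τadd } with hτh
  have hcστ : ∀ x, σ (τ x) = τ (σ x) :=
    hcomm (RingEquiv.ofBijective τh ⟨τinj, τsurj⟩) (fun c hc => τfix c hc)
  have itστ : ∀ (n : ℕ) (x : K), (⇑σ)^[n] (τ x) = τ ((⇑σ)^[n] x) := by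
    intro n
    induction n with
    | zero => intro x; rfl
    | succ n ih =>
      intro x
      rw [Function.iterate_succ_apply', ih, hcστ, Function.iterate_succ_apply' (⇑σ) n x]
  -- H(t) = k·t
  have trel : ∀ c : K,
      pmul (⇑σ) b (ev K m 1) (iota K m c) = pmul (⇑σ) b (iota K m (σ c)) (ev K m 1) := by
    intro c
    rw [pmul_iota_right σ b hm0, pmul_iota_left σ b hm0]
    funext w
    rw [sum_ev_apply]
    by_cases h : (w : ℕ) = 1 <;> simp [ev, h]
  have step1 : ∀ c : K,
      pmul (⇑σ) b (H (ev K m 1)) (iota K m (τ c)) = τ (σ c) • H (ev K m 1) := by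
    intro c
    rw [← Hιτ, ← Hmul, trel c, Hmul, Hιτ, pmul_iota_left σ b hm0]
  set u1 : Fin m → K := H (ev K m 1) with hu1
  have coefrel : ∀ (w : Fin m) (c : K), u1 w * (⇑σ)^[(w : ℕ)] (τ c) = τ (σ c) * u1 w := by
    intro w c
    have h := congrFun (step1 c) w
    rw [pmul_iota_right σ b hm0, sum_ev_apply] at h
    simpa using h
  set k : K := u1 ⟨1, hm1⟩ with hk
  have u1eq : u1 = k • ev K m 1 := by
    funext w
    by_cases h : (w : ℕ) = 1
    · have hw : w = ⟨1, hm1⟩ := Fin.ext h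
      rw [hw]
      simp [ev, hk]
    · have hz : u1 w = 0 := by
        by_contra hne
        have hkey : ∀ c : K, (⇑σ)^[(w : ℕ)] (τ c) = τ (σ c) := by
          intro c
          have h1 := coefrel w c
          rw [mul_comm (τ (σ c)) (u1 w)] at h1
          exact mul_left_cancel₀ hne h1
        rcases Nat.eq_zero_or_pos (w : ℕ) with h0 | h0
        · apply hσ
          apply RingEquiv.ext
          intro c
          have h1 := hkey c
          rw [h0] at h1
          simp only [Function.iterate_zero, id_eq] at h1
          exact (τinj h1).symm
        · have hw2 : 2 ≤ (w : ℕ) := by omega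
          have hid : ∀ y : K, (⇑σ)^[(w : ℕ) - 1] y = y := by
            intro y
            obtain ⟨c, rfl⟩ := τsurj y
            have h1 := hkey c
            rw [← hcστ] at h1
            have h2 : (⇑σ)^[(w : ℕ)] (τ c) = σ ((⇑σ)^[(w : ℕ) - 1] (τ c)) := by
              have hww : (w : ℕ) = ((w : ℕ) - 1) + 1 := by omega
              conv_lhs => rw [hww]
              rw [Function.iterate_succ_apply']
            rw [h2] at h1
            exact σ.injective h1
          exact (horder ((w : ℕ) - 1) (by omega) (by have := w.isLt; omega)) (funext hid)
      rw [hz]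
      simp [ev, h]
  set P : ℕ → K := fun s => ∏ l ∈ Finset.range s, (⇑σ)^[l] k with hP
  have Padd : ∀ i j : ℕ, P i * (⇑σ)^[i] (P j) = P (i + j) := fun i j => Pprod σ k i j
  -- H on the basis
  have Hev : ∀ n : ℕ, n < m → H (ev K m n) = P n • ev K m n := by
    intro n
    induction n with
    | zero =>
      intro h
      have h1 : ev K m 0 = pone K m := rfl
      rw [h1, Hone]
      have h2 : P 0 = 1 := by simp [hP]
      rw [h2, one_smul]
    | succ n ih =>
      intro h
      have hn : n < m := by omega
      have e1 : ev K m (n + 1) = pmul (⇑σ) b (ev K m n) (ev K m 1) := by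
        rw [show pmul (⇑σ) b (ev K m n) (ev K m 1) = tred (⇑σ) m b (n + 1) from
          pmul_ev_ev σ b ⟨n, hn⟩ ⟨1, hm1⟩, tred_lt (⇑σ) b h]
      rw [e1, Hmul, ih hn, ← hu1, u1eq, pmul_smul_left]
      have e2 : pmul (⇑σ) b (ev K m n) (k • ev K m 1) = (⇑σ)^[n] k • ev K m (n + 1) := by
        rw [show ev K m n = ev K m ((⟨n, hn⟩ : Fin m) : ℕ) from rfl, pmul_ev_left, pm1_smul,
          show ev K m 1 = tred (⇑σ) m b 1 from (tred_lt (⇑σ) b hm1).symm, pm1_tred,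
          tred_lt (⇑σ) b h]
      rw [e2, smul_smul]
      congr 1
      simp only [hP]
      rw [Finset.prod_range_succ]
  have Hsm : ∀ (c : K) (n : ℕ), n < m → H (c • ev K m n) = (τ c * P n) • ev K m n := by
    intro c n h
    have h1 : c • ev K m n = pmul (⇑σ) b (iota K m c) (ev K m n) :=
      (pmul_iota_left σ b hm0 c _).symm
    rw [h1, Hmul, Hιτ, pmul_iota_left σ b hm0, Hev n h, smul_smul]
  have Hcoord : ∀ (x : Fin m → K) (w : Fin m), H x w = τ (x w) * P (w : ℕ) := by
    intro x w
    conv_lhs => rw [decomp x]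
    rw [Hsum, Finset.sum_congr rfl (fun i _ => Hsm (x i) (i : ℕ) i.isLt), sum_ev_apply]
  -- the key condition τ(b0) = N(k)·b0
  have keyE : τ b0 = P m * b0 := by
    have e1 : pmul (⇑σ) b (ev K m (m - 1)) (ev K m 1) = tred (⇑σ) m b m := by
      have h1 := pmul_ev_ev σ b ⟨m - 1, by omega⟩ ⟨1, hm1⟩
      rw [show ((⟨m - 1, by omega⟩ : Fin m) : ℕ) + ((⟨1, hm1⟩ : Fin m) : ℕ) = m from by
        show m - 1 + 1 = m; omega] at h1
      exact h1
    have e2 := Hmul (ev K m (m - 1)) (ev K m 1)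
    rw [e1, tred_m σ b hm0, Hsum,
      Finset.sum_congr rfl (fun p _ => Hsm (b p) (p : ℕ) p.isLt),
      Hev (m - 1) (by omega), ← hu1, u1eq, pmul_smul_left] at e2
    have e3 : pmul (⇑σ) b (ev K m (m - 1)) (k • ev K m 1)
        = (⇑σ)^[m - 1] k • tred (⇑σ) m b m := by
      rw [show ev K m (m - 1) = ev K m ((⟨m - 1, by omega⟩ : Fin m) : ℕ) from rfl,
        pmul_ev_left, pm1_smul,
        show ev K m 1 = tred (⇑σ) m b 1 from (tred_lt (⇑σ) b hm1).symm, pm1_tred,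
        show ((⟨m - 1, by omega⟩ : Fin m) : ℕ) + 1 = m from by show m - 1 + 1 = m; omega]
    rw [e3, smul_smul] at e2
    have e4 := congrFun e2 ⟨0, hm0⟩
    rw [sum_ev_apply] at e4
    have e5 : tred (⇑σ) m b m ⟨0, hm0⟩ = b0 := by
      rw [tred_m σ b hm0, sum_ev_apply]
    rw [Pi.smul_apply, smul_eq_mul, e5] at e4
    have e6 : P 0 = 1 := by simp [hP]
    rw [e6, mul_one] at e4
    have e7 : P (m - 1) * (⇑σ)^[m - 1] k = P m := by
      have := Padd (m - 1) 1
      rw [show (m - 1) + 1 = m from by omega] at this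
      rw [← this]
      congr 1
      simp [hP]
    rw [← e7]
    rw [mul_assoc] at e4 ⊢
    exact e4
  -- now prove H is an automorphism of S_f
  refine ⟨Hbij, Hadd, Hsmul, ?_, Hone⟩
  intro x y
  show H (pmul (⇑σ) (fun i : Fin m => if (i : ℕ) = 0 then b0 else 0) x y)
      = pmul (⇑σ) (fun i : Fin m => if (i : ℕ) = 0 then b0 else 0) (H x) (H y)
  set af : Fin m → K := fun i : Fin m => if (i : ℕ) = 0 then b0 else 0 with haf
  have tredf : ∀ {s : ℕ}, m ≤ s → s - m < m →
      tred (⇑σ) m af s = (⇑σ)^[s - m] b0 • ev K m (s - m) := by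
    intro s h1 h2
    rw [tred_ge (⇑σ) af h1, Finset.sum_eq_single (⟨0, hm0⟩ : Fin m)]
    · show (⇑σ)^[s - m] b0 • tred (⇑σ) m af (s - m + 0) = _
      rw [Nat.add_zero, tred_lt (⇑σ) af h2]
    · intro j _ hj
      have hj0 : (j : ℕ) ≠ 0 := fun hc => hj (Fin.ext hc)
      have : af j = 0 := by simp [haf, hj0]
      rw [this, it_zero, zero_smul]
    · simp
  show H (∑ i : Fin m, ∑ j : Fin m,
      (x i * (⇑σ)^[(i : ℕ)] (y j)) • tred (⇑σ) m af ((i : ℕ) + (j : ℕ)))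
    = ∑ i : Fin m, ∑ j : Fin m,
      (H x i * (⇑σ)^[(i : ℕ)] (H y j)) • tred (⇑σ) m af ((i : ℕ) + (j : ℕ))
  rw [Hsum]
  refine Finset.sum_congr rfl fun i _ => ?_
  rw [Hsum]
  refine Finset.sum_congr rfl fun j _ => ?_
  rw [Hcoord x i, Hcoord y j]
  by_cases hij : (i : ℕ) + (j : ℕ) < m
  · rw [tred_lt (⇑σ) af hij, Hsm _ _ hij]
    congr 1
    rw [τmul, ← itστ, ← Padd, it_mul σ (i : ℕ) (τ (y j)) (P (j : ℕ))]
    ring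
  · have h1 : m ≤ (i : ℕ) + (j : ℕ) := by omega
    have h2 : (i : ℕ) + (j : ℕ) - m < m := by
      have := i.isLt; have := j.isLt; omega
    rw [tredf h1 h2, smul_smul, Hsm _ _ h2, smul_smul]
    congr 1
    rw [τmul, τmul, ← itστ, ← itστ, keyE, it_mul σ ((i : ℕ) + (j : ℕ) - m) (P m) b0]
    have hPij : P (i : ℕ) * (⇑σ)^[(i : ℕ)] (P (j : ℕ))
        = P ((i : ℕ) + (j : ℕ) - m) * (⇑σ)^[(i : ℕ) + (j : ℕ) - m] (P m) := by
      rw [Padd, Padd]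
      congr 1
      omega
    rw [it_mul σ (i : ℕ) (τ (y j)) (P (j : ℕ))]
    linear_combination (-(τ (x i) * (⇑σ)^[(i : ℕ)] (τ (y j)) * (⇑σ)^[(i : ℕ) + (j : ℕ) - m] b0)) * hPij
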